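/- arXiv:1801.07784 — 5 statements merged into one kernel-verified Lean document; each statement's English description precedes it below -/
import Mathlib

section
/- For every t > 0 and every x ≥ 0 one has ψ(t,x) ≥ 1. Consequently ψ(t, z−c) > 0 for all z ≥ c, the value function U(t,z) = (1/β)·log ψ(t, z−c) is well defined, and U(t,z) ≥ 0 for all t > 0 and z ≥ c. -/
/-!
With `1 - erf s = (2/√π) ∫_s^∞ e^{-y²} dy`, `a = x/(σ√(2t))` and `b = βσ√t/√2 ≥ 0`, one has
`ψ(t,x) = erf a + e^{b² - 2ab} (1 - erf (a - b))`, so `ψ ≥ 1` says that the Gaussian tail from `a`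
is at most `e^{b² - 2ab}` times the tail from `a - b`. Substituting `y = u - b` in the latter, this
is the pointwise bound `e^{-u²} ≤ e^{b² - 2ab} e^{-(u-b)²}`, i.e. `2ab ≤ 2ub`, valid for `u > a`.
-/

open MeasureTheory Set Real

theorem integral_Ioi_comp_sub_right {E : Type*} [NormedAddCommGroup E] [NormedSpace ℝ E]
    (f : ℝ → E) (a b : ℝ) : ∫ x in Ioi a, f (x - b) = ∫ x in Ioi (a - b), f x := by
  have hpre : (fun x : ℝ => x - b) ⁻¹' Ioi (a - b) = Ioi a := by
    ext x; simp
  rw [← (measurePreserving_sub_right volume b).setIntegral_preimage_emb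
    (measurableEmbedding_subRight b) f, hpre]

theorem integrable_exp_neg_sq : Integrable fun y : ℝ => exp (-y ^ 2) := by
  simpa using integrable_exp_neg_mul_sq one_pos

theorem intervalIntegral_exp_neg_sq_eq_sub (s : ℝ) :
    ∫ y in (0 : ℝ)..s, exp (-y ^ 2) = √π / 2 - ∫ y in Ioi s, exp (-y ^ 2) := by
  rw [← intervalIntegral.integral_Ioi_sub_Ioi' integrable_exp_neg_sq.integrableOn
    integrable_exp_neg_sq.integrableOn]
  congr 1
  simpa using integral_gaussian_Ioi 1

theorem integral_Ioi_exp_neg_sq_le (a : ℝ) {b : ℝ} (hb : 0 ≤ b) :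
    ∫ y in Ioi a, exp (-y ^ 2) ≤ exp (b ^ 2 - 2 * a * b) * ∫ y in Ioi (a - b), exp (-y ^ 2) := by
  rw [← integral_Ioi_comp_sub_right (fun y => exp (-y ^ 2)), ← integral_const_mul]
  refine setIntegral_mono_on integrable_exp_neg_sq.integrableOn
    ((integrable_exp_neg_sq.comp_sub_right b).const_mul _).integrableOn measurableSet_Ioi
    fun u (hu : a < u) => ?_
  rw [← exp_add, exp_le_exp]
  nlinarith

theorem one_sub_erf_eq {erf : ℝ → ℝ}
    (herf : ∀ x : ℝ, erf x = (2 / √π) * ∫ y in (0 : ℝ)..x, exp (-y ^ 2)) (s : ℝ) :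
    1 - erf s = (2 / √π) * ∫ y in Ioi s, exp (-y ^ 2) := by
  have hπ : √π ≠ 0 := (sqrt_pos.mpr pi_pos).ne'
  rw [herf, intervalIntegral_exp_neg_sq_eq_sub]
  field_simp
  ring

theorem one_le_erf_add_exp_mul_one_sub_erf {erf : ℝ → ℝ}
    (herf : ∀ x : ℝ, erf x = (2 / √π) * ∫ y in (0 : ℝ)..x, exp (-y ^ 2)) (a : ℝ) {b : ℝ}
    (hb : 0 ≤ b) : 1 ≤ erf a + exp (b ^ 2 - 2 * a * b) * (1 - erf (a - b)) := by
  have htail : 1 - erf a ≤ exp (b ^ 2 - 2 * a * b) * (1 - erf (a - b)) := by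
    rw [one_sub_erf_eq herf, one_sub_erf_eq herf, mul_left_comm]
    exact mul_le_mul_of_nonneg_left (integral_Ioi_exp_neg_sq_le a hb) (by positivity)
  linarith

theorem neg_mul_add_eq_sq_sub {σ t : ℝ} (hσ : σ ≠ 0) (ht : 0 < t) (β x : ℝ) :
    -β * x + β ^ 2 * σ ^ 2 * t / 2 =
      (β * σ * √t / √2) ^ 2 - 2 * (x / (σ * √(2 * t))) * (β * σ * √t / √2) := by
  have hsqt : √t ≠ 0 := (sqrt_pos.mpr ht).ne'
  rw [sqrt_mul zero_le_two]
  field_simp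
  rw [sq_sqrt ht.le, sq_sqrt zero_le_two]
  ring

theorem psi_ge_one_general
    (σ γ κ c : ℝ) (hσ : 0 < σ) (hκ : 0 < κ)
    (β : ℝ) (hβ : β = γ ^ 2 / (2 * κ * σ ^ 2))
    (erf : ℝ → ℝ)
    (herf : ∀ x : ℝ, erf x = (2 / Real.sqrt Real.pi) * ∫ y in (0:ℝ)..x, Real.exp (-y ^ 2))
    (ψ : ℝ → ℝ → ℝ)
    (hψ : ∀ t x : ℝ, ψ t x =
      erf (x / (σ * Real.sqrt (2 * t))) +
        Real.exp (-β * x + β ^ 2 * σ ^ 2 * t / 2) *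
          (1 - erf (x / (σ * Real.sqrt (2 * t)) - β * σ * Real.sqrt t / Real.sqrt 2))) :
    (∀ t : ℝ, 0 < t → ∀ x : ℝ, 0 ≤ x → 1 ≤ ψ t x) ∧
      (∀ t : ℝ, 0 < t → ∀ z : ℝ, c ≤ z →
        0 < ψ t (z - c) ∧ 0 ≤ (1 / β) * Real.log (ψ t (z - c))) := by
  have hβ0 : 0 ≤ β := by rw [hβ]; positivity
  have one_le : ∀ t : ℝ, 0 < t → ∀ x : ℝ, 0 ≤ x → 1 ≤ ψ t x := by
    intro t ht x _
    rw [hψ, neg_mul_add_eq_sq_sub hσ.ne' ht]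
    exact one_le_erf_add_exp_mul_one_sub_erf herf _ (by positivity)
  refine ⟨one_le, fun t ht z hz => ?_⟩
  have h1 := one_le t ht (z - c) (sub_nonneg.mpr hz)
  exact ⟨by linarith, mul_nonneg (by positivity) (log_nonneg h1)⟩

/-- For every t > 0 and every x ≥ 0 one has ψ(t,x) ≥ 1.
Consequently ψ(t, z−c) > 0 for all z ≥ c, the value function
U(t,z) = (1/β)·log ψ(t, z−c) is well defined, and U(t,z) ≥ 0 for all t > 0 and z ≥ c. -/
theorem psi_ge_one
    (σ γ κ c : ℝ) (hσ : 0 < σ) (hγ : 0 < γ) (hκ : 0 < κ)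
    (β : ℝ) (hβ : β = γ ^ 2 / (2 * κ * σ ^ 2))
    (erf : ℝ → ℝ)
    (herf : ∀ x : ℝ, erf x = (2 / Real.sqrt Real.pi) * ∫ y in (0:ℝ)..x, Real.exp (-y ^ 2))
    (ψ : ℝ → ℝ → ℝ)
    (hψ : ∀ t x : ℝ, ψ t x =
      erf (x / (σ * Real.sqrt (2 * t))) +
        Real.exp (-β * x + β ^ 2 * σ ^ 2 * t / 2) *
          (1 - erf (x / (σ * Real.sqrt (2 * t)) - β * σ * Real.sqrt t / Real.sqrt 2))) :
    (∀ t : ℝ, 0 < t → ∀ x : ℝ, 0 ≤ x → 1 ≤ ψ t x) ∧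
      (∀ t : ℝ, 0 < t → ∀ z : ℝ, c ≤ z →
        0 < ψ t (z - c) ∧ 0 ≤ (1 / β) * Real.log (ψ t (z - c))) :=
  psi_ge_one_general σ γ κ c hσ hκ β hβ erf herf ψ hψ
end

section
/- For every t > 0 and x ∈ ℝ, the partial derivative of ψ with respect to t exists at (t,x) and equals ∂_t ψ(t,x) = (βσ/√(2πt))·exp(−x²/(2tσ²)) + (β²σ²/2)·exp(−βx + β²σ²t/2)·(1 − erf((x − βσ²t)/(σ√(2t)))). -/
/-!
Write `a(s) = x / (σ√(2s))` and `b(s) = βσ√s / √2`, so that `ψ(s,x) = erf a + e^{b² - 2ab} (1 - erf (a - b))`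
(the product `ab = βx/2` does not depend on `s`). Differentiating, the two Gaussian terms produced by
`erf'` combine through `e^{b² - 2ab} e^{-(a-b)²} = e^{-a²}`: the `a'` contributions cancel and only
`(2/√π) e^{-a²} b'` survives, next to the derivative of the exponential factor.
-/

open Real

lemma hasDerivAt_of_eq_two_div_sqrt_pi_mul_integral {erf : ℝ → ℝ}
    (herf : ∀ x : ℝ, erf x = (2 / √π) * ∫ y in (0:ℝ)..x, exp (-y ^ 2)) (u : ℝ) :
    HasDerivAt erf (2 / √π * exp (-u ^ 2)) u := by
  have hc : Continuous fun y : ℝ => exp (-y ^ 2) := by fun_prop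
  rw [funext herf]
  exact (intervalIntegral.integral_hasDerivAt_right (hc.intervalIntegrable 0 u)
    (hc.stronglyMeasurableAtFilter _ _) hc.continuousAt).const_mul _

lemma exp_mul_exp_neg_sub_sq {a b e : ℝ} (he : e = b ^ 2 - 2 * a * b) :
    exp e * exp (-(a - b) ^ 2) = exp (-a ^ 2) := by
  rw [← exp_add, he]
  ring_nf

lemma hasDerivAt_erf_add_exp_mul_one_sub_erf {erf : ℝ → ℝ}
    (herf : ∀ x : ℝ, erf x = (2 / √π) * ∫ y in (0:ℝ)..x, exp (-y ^ 2))
    {a b e : ℝ → ℝ} {a' b' e' t : ℝ} (ha : HasDerivAt a a' t) (hb : HasDerivAt b b' t)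
    (he : HasDerivAt e e' t) (hab : e t = b t ^ 2 - 2 * a t * b t) :
    HasDerivAt (fun s => erf (a s) + exp (e s) * (1 - erf (a s - b s)))
      (2 / √π * exp (-a t ^ 2) * b' + e' * exp (e t) * (1 - erf (a t - b t))) t := by
  have herf' := hasDerivAt_of_eq_two_div_sqrt_pi_mul_integral herf
  have hsum := ((herf' (a t)).comp t ha).add
    (he.exp.mul ((hasDerivAt_const t 1).sub ((herf' (a t - b t)).comp t (ha.sub hb))))
  refine hsum.congr_deriv ?_
  have hgauss := exp_mul_exp_neg_sub_sq hab
  simp only [Pi.sub_apply, Function.comp_apply]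
  linear_combination 2 / √π * (b' - a') * hgauss

section

variable {σ t : ℝ} (β x : ℝ)

lemma neg_mul_add_mul_div_two_eq (hσ : σ ≠ 0) (ht : 0 < t) :
    -β * x + β ^ 2 * σ ^ 2 * t / 2
      = (β * σ * √t / √2) ^ 2 - 2 * (x / (σ * √(2 * t))) * (β * σ * √t / √2) := by
  rw [sqrt_mul zero_le_two]
  field_simp
  rw [sq_sqrt zero_le_two, sq_sqrt ht.le]
  ring

lemma sub_div_mul_sqrt_two_mul (hσ : σ ≠ 0) (ht : 0 < t) :
    (x - β * σ ^ 2 * t) / (σ * √(2 * t)) = x / (σ * √(2 * t)) - β * σ * √t / √2 := by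
  rw [sqrt_mul zero_le_two]
  field_simp
  rw [sq_sqrt ht.le]

lemma two_div_sqrt_pi_mul_exp_mul_eq (hσ : σ ≠ 0) (ht : 0 < t) :
    2 / √π * exp (-(x / (σ * √(2 * t))) ^ 2) * (β * σ * (1 / (2 * √t)) / √2)
      = β * σ / √(2 * π * t) * exp (-x ^ 2 / (2 * t * σ ^ 2)) := by
  have hexp : -(x / (σ * √(2 * t))) ^ 2 = -x ^ 2 / (2 * t * σ ^ 2) := by
    rw [div_pow, mul_pow, sq_sqrt (by positivity)]
    ring
  rw [hexp, sqrt_mul (by positivity), sqrt_mul zero_le_two]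
  field_simp

end

theorem psi_deriv_t_general
    (σ : ℝ) (hσ : 0 < σ)
    (β : ℝ)
    (erf : ℝ → ℝ)
    (herf : ∀ x : ℝ, erf x = (2 / Real.sqrt Real.pi) * ∫ y in (0:ℝ)..x, Real.exp (-y ^ 2))
    (ψ : ℝ → ℝ → ℝ)
    (hψ : ∀ t x : ℝ, ψ t x =
      erf (x / (σ * Real.sqrt (2 * t))) +
        Real.exp (-β * x + β ^ 2 * σ ^ 2 * t / 2) *
          (1 - erf (x / (σ * Real.sqrt (2 * t)) - β * σ * Real.sqrt t / Real.sqrt 2))) :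
    ∀ t : ℝ, 0 < t → ∀ x : ℝ,
      HasDerivAt (fun s => ψ s x)
        (β * σ / Real.sqrt (2 * Real.pi * t) * Real.exp (-x ^ 2 / (2 * t * σ ^ 2)) +
          β ^ 2 * σ ^ 2 / 2 * Real.exp (-β * x + β ^ 2 * σ ^ 2 * t / 2) *
            (1 - erf ((x - β * σ ^ 2 * t) / (σ * Real.sqrt (2 * t))))) t := by
  intro t ht x
  have ha : DifferentiableAt ℝ (fun s => x / (σ * √(2 * s))) t := by
    fun_prop (disch := positivity)
  have hb : HasDerivAt (fun s => β * σ * √s / √2) (β * σ * (1 / (2 * √t)) / √2) t :=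
    ((hasDerivAt_sqrt ht.ne').const_mul (β * σ)).div_const √2
  have he : HasDerivAt (fun s => -β * x + β ^ 2 * σ ^ 2 * s / 2) (β ^ 2 * σ ^ 2 / 2) t := by
    simpa using (((hasDerivAt_id t).const_mul (β ^ 2 * σ ^ 2)).div_const 2).const_add (-β * x)
  simp only [hψ]
  rw [sub_div_mul_sqrt_two_mul β x hσ.ne' ht, ← two_div_sqrt_pi_mul_exp_mul_eq β x hσ.ne' ht]
  exact hasDerivAt_erf_add_exp_mul_one_sub_erf herf ha.hasDerivAt hb he
    (neg_mul_add_mul_div_two_eq β x hσ.ne' ht)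

/-- For every t > 0 and x ∈ ℝ, the partial derivative of ψ with respect
to t exists at (t,x) and equals
∂_t ψ(t,x) = (βσ/√(2πt))·exp(−x²/(2tσ²))
  + (β²σ²/2)·exp(−βx + β²σ²t/2)·(1 − erf((x − βσ²t)/(σ√(2t)))). -/
theorem psi_deriv_t
    (σ γ κ c : ℝ) (hσ : 0 < σ) (hγ : 0 < γ) (hκ : 0 < κ)
    (β : ℝ) (hβ : β = γ ^ 2 / (2 * κ * σ ^ 2))
    (erf : ℝ → ℝ)
    (herf : ∀ x : ℝ, erf x = (2 / Real.sqrt Real.pi) * ∫ y in (0:ℝ)..x, Real.exp (-y ^ 2))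
    (ψ : ℝ → ℝ → ℝ)
    (hψ : ∀ t x : ℝ, ψ t x =
      erf (x / (σ * Real.sqrt (2 * t))) +
        Real.exp (-β * x + β ^ 2 * σ ^ 2 * t / 2) *
          (1 - erf (x / (σ * Real.sqrt (2 * t)) - β * σ * Real.sqrt t / Real.sqrt 2))) :
    ∀ t : ℝ, 0 < t → ∀ x : ℝ,
      HasDerivAt (fun s => ψ s x)
        (β * σ / Real.sqrt (2 * Real.pi * t) * Real.exp (-x ^ 2 / (2 * t * σ ^ 2)) +
          β ^ 2 * σ ^ 2 / 2 * Real.exp (-β * x + β ^ 2 * σ ^ 2 * t / 2) *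
            (1 - erf ((x - β * σ ^ 2 * t) / (σ * Real.sqrt (2 * t))))) t :=
  psi_deriv_t_general σ hσ β erf herf ψ hψ
end

section
/- The function ψ satisfies the heat equation on (0,∞) × ℝ: for every t > 0 and x ∈ ℝ, ∂_t ψ(t,x) = (σ²/2)·∂_xx ψ(t,x), i.e. the second x-derivative of ψ satisfies ∂_xx ψ(t,x) = (2/σ²)·∂_t ψ(t,x). -/
/-!
Write `ψ = W₀ + exp (-β x + β² σ² t / 2) * (1 - W_{βσ²})` with
`W_m t x = erf ((x - m t) / (σ √(2t)))`. Because `erf'' z = -2 z erf' z`, every `W_m` solves the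
advection–diffusion equation `∂ₜW + m ∂ₓW = (σ²/2) ∂ₓₓW`, and multiplying a solution with drift
`m = -σ² a` by `exp (a x + σ² a² t / 2)` gives a solution of the heat equation.
-/

open Real

structure SolvesAdvectionDiffusionAt (D m : ℝ) (u : ℝ → ℝ → ℝ) (t x : ℝ) : Prop where
  differentiableAt_time : DifferentiableAt ℝ (u · x) t
  differentiable_space : Differentiable ℝ (u t)
  differentiableAt_deriv_space : DifferentiableAt ℝ (deriv (u t)) x
  eq : deriv (u · x) t + m * deriv (u t) x = D * deriv (deriv (u t)) x

namespace SolvesAdvectionDiffusionAt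

variable {D m a : ℝ} {u v : ℝ → ℝ → ℝ} {t x : ℝ}

theorem add (hu : SolvesAdvectionDiffusionAt D m u t x)
    (hv : SolvesAdvectionDiffusionAt D m v t x) :
    SolvesAdvectionDiffusionAt D m (fun s y => u s y + v s y) t x := by
  have hd : deriv (fun y => u t y + v t y) = fun y => deriv (u t) y + deriv (v t) y :=
    funext fun y => deriv_add (hu.differentiable_space y) (hv.differentiable_space y)
  refine ⟨hu.differentiableAt_time.fun_add hv.differentiableAt_time,
    hu.differentiable_space.fun_add hv.differentiable_space, ?_, ?_⟩
  · rw [hd]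
    exact hu.differentiableAt_deriv_space.fun_add hv.differentiableAt_deriv_space
  · rw [hd, deriv_fun_add hu.differentiableAt_time hv.differentiableAt_time,
      deriv_fun_add hu.differentiableAt_deriv_space hv.differentiableAt_deriv_space]
    linear_combination hu.eq + hv.eq

theorem const_sub (hu : SolvesAdvectionDiffusionAt D m u t x) (c : ℝ) :
    SolvesAdvectionDiffusionAt D m (fun s y => c - u s y) t x := by
  have hd : deriv (fun y => c - u t y) = fun y => -deriv (u t) y := deriv_const_sub' c
  refine ⟨hu.differentiableAt_time.const_sub c, hu.differentiable_space.const_sub c, ?_, ?_⟩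
  · rw [hd]
    exact hu.differentiableAt_deriv_space.fun_neg
  · rw [hd, deriv_const_sub, deriv.fun_neg]
    linear_combination -hu.eq

theorem exp_mul (hu : SolvesAdvectionDiffusionAt D m u t x) (hm : m = -2 * D * a) :
    SolvesAdvectionDiffusionAt D 0 (fun s y => exp (a * y + D * a ^ 2 * s) * u s y) t x := by
  set e : ℝ → ℝ → ℝ := fun s y => exp (a * y + D * a ^ 2 * s)
  subst hm
  have he_space (y : ℝ) : HasDerivAt (e t) (a * e t y) y :=
    (((hasDerivAt_id' y).const_mul a).add_const _).exp.congr_deriv (by ring)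
  have he_time : HasDerivAt (e · x) (D * a ^ 2 * e t x) t :=
    (((hasDerivAt_id' t).const_mul (D * a ^ 2)).const_add _).exp.congr_deriv (by ring)
  have hspace (y : ℝ) := (he_space y).mul (hu.differentiable_space y).hasDerivAt
  have hd : deriv (fun y => e t y * u t y) = fun y => a * e t y * u t y + e t y * deriv (u t) y :=
    funext fun y => (hspace y).deriv
  have hdd : HasDerivAt (fun y => a * e t y * u t y + e t y * deriv (u t) y)
      (a * (a * e t x) * u t x + a * e t x * deriv (u t) x +
        (a * e t x * deriv (u t) x + e t x * deriv (deriv (u t)) x)) x :=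
    (((he_space x).const_mul a).mul (hu.differentiable_space x).hasDerivAt).add
      ((he_space x).mul hu.differentiableAt_deriv_space.hasDerivAt)
  have hdt := he_time.fun_mul hu.differentiableAt_time.hasDerivAt
  refine ⟨hdt.differentiableAt, fun y => (hspace y).differentiableAt, ?_, ?_⟩
  · rw [hd]; exact hdd.differentiableAt
  · rw [hd, hdd.deriv, hdt.deriv]
    linear_combination e t x * hu.eq

end SolvesAdvectionDiffusionAt

section Similarity

variable {F F' : ℝ → ℝ} {σ t : ℝ}

theorem hasDerivAt_similarity_time (hF : ∀ z, HasDerivAt F (F' z) z) (hσ : σ ≠ 0) (ht : 0 < t)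
    (m x : ℝ) :
    HasDerivAt (fun s => F ((x - m * s) / (σ * √(2 * s))))
      (F' ((x - m * t) / (σ * √(2 * t))) *
        (-m / (σ * √(2 * t)) - (x - m * t) / (σ * √(2 * t)) / (2 * t))) t := by
  have h2t : 2 * t ≠ 0 := by positivity
  have hsqrt : HasDerivAt (fun s => σ * √(2 * s)) (σ * (2 / (2 * √(2 * t)))) t :=
    (((hasDerivAt_id' t).const_mul 2).sqrt (by simpa using h2t)).const_mul σ |>.congr_deriv
      (by ring)
  have hz := ((hasDerivAt_id' t).const_mul m).const_sub x |>.div hsqrt (by positivity)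
  refine (hF _).comp t (hz.congr_deriv ?_)
  have hsq : √(2 * t) ^ 2 = 2 * t := sq_sqrt (by positivity)
  have : √(2 * t) ≠ 0 := by positivity
  field_simp
  rw [hsq]
  ring

theorem solvesAdvectionDiffusionAt_similarity (hF : ∀ z, HasDerivAt F (F' z) z)
    (hF' : ∀ z, HasDerivAt F' (-2 * z * F' z) z) (hσ : σ ≠ 0) (ht : 0 < t) (m x : ℝ) :
    SolvesAdvectionDiffusionAt (σ ^ 2 / 2) m
      (fun s y => F ((y - m * s) / (σ * √(2 * s)))) t x := by
  set a := σ * √(2 * t)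
  have ha : a ≠ 0 := by positivity
  have hz (y : ℝ) : HasDerivAt (fun y => (y - m * t) / a) (1 / a) y :=
    ((hasDerivAt_id' y).sub_const _).div_const a
  have hx (y : ℝ) : HasDerivAt (fun y => F ((y - m * t) / a)) (F' ((y - m * t) / a) / a) y :=
    ((hF _).comp y (hz y)).congr_deriv (by ring)
  have hd : deriv (fun y => F ((y - m * t) / a)) = fun y => F' ((y - m * t) / a) / a :=
    funext fun y => (hx y).deriv
  have hxx : HasDerivAt (fun y => F' ((y - m * t) / a) / a)
      (-2 * ((x - m * t) / a) * F' ((x - m * t) / a) / a ^ 2) x :=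
    (((hF' _).comp x (hz x)).div_const a).congr_deriv (by field_simp)
  have htime := hasDerivAt_similarity_time hF hσ ht m x
  refine ⟨htime.differentiableAt, fun y => (hx y).differentiableAt, ?_, ?_⟩
  · rw [hd]; exact hxx.differentiableAt
  · rw [hd, hxx.deriv, htime.deriv]
    have hsq : √(2 * t) ^ 2 = 2 * t := sq_sqrt (by positivity)
    have : √(2 * t) ≠ 0 := by positivity
    simp only [a]
    generalize √(2 * t) = r at *
    field_simp
    linear_combination (-(x - m * t) * F' ((x - m * t) / (σ * r))) * hsq

end Similarity

theorem hasDerivAt_const_mul_exp_neg_sq (c z : ℝ) :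
    HasDerivAt (fun z => c * exp (-z ^ 2)) (-2 * z * (c * exp (-z ^ 2))) z :=
  (((hasDerivAt_pow 2 z).fun_neg).exp.const_mul c).congr_deriv (by ring)

theorem hasDerivAt_of_eq_integral_exp_neg_sq {erf : ℝ → ℝ}
    (herf : ∀ x, erf x = 2 / √π * ∫ y in (0 : ℝ)..x, exp (-y ^ 2)) (z : ℝ) :
    HasDerivAt erf (2 / √π * exp (-z ^ 2)) z := by
  rw [funext herf]
  exact ((Continuous.integral_hasStrictDerivAt (by fun_prop) 0 z).hasDerivAt).const_mul _

/-- For `t ≤ 0` both sides are the junk value `0`. -/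
theorem div_mul_sqrt_sub_eq_sub_div (x σ β t : ℝ) :
    x / (σ * √(2 * t)) - β * σ * √t / √2 = (x - β * σ ^ 2 * t) / (σ * √(2 * t)) := by
  rcases le_or_gt t 0 with ht | ht
  · simp [sqrt_eq_zero'.2 ht, sqrt_eq_zero'.2 (by linarith : 2 * t ≤ 0)]
  rcases eq_or_ne σ 0 with rfl | hσ
  · simp
  rw [sqrt_mul zero_le_two]
  have : √t ≠ 0 := by positivity
  field_simp
  rw [sq_sqrt ht.le]
  ring

theorem psi_heat_equation_general
    (σ : ℝ) (hσ : 0 < σ)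
    (β : ℝ)
    (erf : ℝ → ℝ)
    (herf : ∀ x : ℝ, erf x = (2 / Real.sqrt Real.pi) * ∫ y in (0:ℝ)..x, Real.exp (-y ^ 2))
    (ψ : ℝ → ℝ → ℝ)
    (hψ : ∀ t x : ℝ, ψ t x =
      erf (x / (σ * Real.sqrt (2 * t))) +
        Real.exp (-β * x + β ^ 2 * σ ^ 2 * t / 2) *
          (1 - erf (x / (σ * Real.sqrt (2 * t)) - β * σ * Real.sqrt t / Real.sqrt 2))) :
    ∀ t : ℝ, 0 < t → ∀ x : ℝ,
      deriv (fun s => ψ s x) t = σ ^ 2 / 2 * iteratedDeriv 2 (fun y => ψ t y) x ∧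
        iteratedDeriv 2 (fun y => ψ t y) x = 2 / σ ^ 2 * deriv (fun s => ψ s x) t := by
  intro t ht x
  have hψ' : ψ = fun s y => erf ((y - 0 * s) / (σ * √(2 * s))) +
      exp (-β * y + σ ^ 2 / 2 * (-β) ^ 2 * s) *
        (1 - erf ((y - β * σ ^ 2 * s) / (σ * √(2 * s)))) := by
    funext s y
    rw [hψ, div_mul_sqrt_sub_eq_sub_div, zero_mul, sub_zero]
    congr 3
    ring
  have hsim := solvesAdvectionDiffusionAt_similarity (hasDerivAt_of_eq_integral_exp_neg_sq herf)
    (hasDerivAt_const_mul_exp_neg_sq _) hσ.ne' ht (x := x)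
  have hsol : SolvesAdvectionDiffusionAt (σ ^ 2 / 2) 0 ψ t x := by
    rw [hψ']
    exact (hsim 0).add (((hsim _).const_sub 1).exp_mul (by ring))
  have heq := hsol.eq
  rw [zero_mul, add_zero] at heq
  rw [iteratedDeriv_succ, iteratedDeriv_one]
  exact ⟨heq, by rw [heq]; field_simp⟩

/-- The function ψ satisfies the heat equation on (0,∞) × ℝ: for every
t > 0 and x ∈ ℝ, ∂_t ψ(t,x) = (σ²/2)·∂_xx ψ(t,x), i.e.
∂_xx ψ(t,x) = (2/σ²)·∂_t ψ(t,x). -/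
theorem psi_heat_equation
    (σ γ κ c : ℝ) (hσ : 0 < σ) (hγ : 0 < γ) (hκ : 0 < κ)
    (β : ℝ) (hβ : β = γ ^ 2 / (2 * κ * σ ^ 2))
    (erf : ℝ → ℝ)
    (herf : ∀ x : ℝ, erf x = (2 / Real.sqrt Real.pi) * ∫ y in (0:ℝ)..x, Real.exp (-y ^ 2))
    (ψ : ℝ → ℝ → ℝ)
    (hψ : ∀ t x : ℝ, ψ t x =
      erf (x / (σ * Real.sqrt (2 * t))) +
        Real.exp (-β * x + β ^ 2 * σ ^ 2 * t / 2) *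
          (1 - erf (x / (σ * Real.sqrt (2 * t)) - β * σ * Real.sqrt t / Real.sqrt 2))) :
    ∀ t : ℝ, 0 < t → ∀ x : ℝ,
      deriv (fun s => ψ s x) t = σ ^ 2 / 2 * iteratedDeriv 2 (fun y => ψ t y) x ∧
        iteratedDeriv 2 (fun y => ψ t y) x = 2 / σ ^ 2 * deriv (fun s => ψ s x) t :=
  psi_heat_equation_general σ hσ β erf herf ψ hψ
end

section
/- The value function U satisfies the semilinear Hamilton–Jacobi–Bellman partial differential equation ∂_t U(t,z) = (σ²/2)·∂_zz U(t,z) + (γ²/(4κ))·(∂_z U(t,z))² for all t > 0 and all z ≥ c (all partial derivatives existing at every such point). -/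
/-!
Cole–Hopf: with `x = z - c`, the function `ψ` solves the heat equation `ψ_t = (σ²/2) ψ_xx`, and
for any nonvanishing solution of it `U = β⁻¹ log ψ` satisfies
`U_t = (σ²/2) U_zz + (σ²β/2) U_z²`, where `σ²β/2 = γ²/(4κ)`.

The second summand of `ψ` is `exp (-βx + β²σ²t/2) · erfc ((x - βσ²t) / (σ√(2t)))`. Its exponent
satisfies `-βx + β²σ²t/2 - (x/(σ√(2t)) - βσ√t/√2)² = -(x/(σ√(2t)))²`, so the Gaussian factors
produced by differentiating the two `erf` terms cancel, leaving `ψ_x = -β · (second summand)`;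
the heat equation follows by one more differentiation. Finally `ψ > 0` for `x ≥ 0` because
`0 ≤ erf` on `[0, ∞)` and `erf < 1`.
-/

open Filter MeasureTheory Topology Real

namespace Real

noncomputable def erf (x : ℝ) : ℝ := 2 / √π * ∫ y in (0 : ℝ)..x, exp (-y ^ 2)

theorem hasDerivAt_erf (x : ℝ) : HasDerivAt erf (2 / √π * exp (-x ^ 2)) x :=
  ((continuous_exp.comp (by fun_prop)).integral_hasStrictDerivAt 0 x).hasDerivAt.const_mul _

theorem strictMono_erf : StrictMono erf :=
  strictMono_of_hasDerivAt_pos hasDerivAt_erf fun _ => by positivity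

@[simp] theorem erf_zero : erf 0 = 0 := by simp [erf]

theorem tendsto_erf_atTop : Tendsto erf atTop (𝓝 1) := by
  have h := intervalIntegral_tendsto_integral_Ioi 0
    (integrable_exp_neg_mul_sq one_pos).integrableOn tendsto_id
  rw [integral_gaussian_Ioi] at h
  convert h.const_mul (2 / √π) using 2 <;> simp [erf]
  field_simp

theorem erf_lt_one (x : ℝ) : erf x < 1 :=
  (strictMono_erf (lt_add_one x)).trans_le
    (strictMono_erf.monotone.ge_of_tendsto tendsto_erf_atTop _)

theorem erf_nonneg {x : ℝ} (hx : 0 ≤ x) : 0 ≤ erf x :=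
  erf_zero ▸ strictMono_erf.monotone hx

theorem hasDerivAt_exp_mul_one_sub_erf {a q : ℝ → ℝ} {a' q' y u : ℝ} (ha : HasDerivAt a a' u)
    (hq : HasDerivAt q q' u) (hkey : a u - q u ^ 2 = -y ^ 2) :
    HasDerivAt (fun v => exp (a v) * (1 - erf (q v)))
      (a' * (exp (a u) * (1 - erf (q u))) - 2 / √π * exp (-y ^ 2) * q') u := by
  refine (ha.exp.mul (((hasDerivAt_erf _).comp u hq).const_sub 1)).congr_deriv ?_
  rw [← hkey, exp_sub, exp_neg, Function.comp_apply]
  field_simp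
  ring

theorem hasDerivAt_erf_add_exp_mul_one_sub_erf {a p r : ℝ → ℝ} {a' p' r' u : ℝ}
    (ha : HasDerivAt a a' u) (hp : HasDerivAt p p' u) (hr : HasDerivAt r r' u)
    (hkey : a u - (p u - r u) ^ 2 = -p u ^ 2) :
    HasDerivAt (fun v => erf (p v) + exp (a v) * (1 - erf (p v - r v)))
      (a' * (exp (a u) * (1 - erf (p u - r u))) + 2 / √π * exp (-p u ^ 2) * r') u := by
  refine (((hasDerivAt_erf _).comp u hp).add
    (hasDerivAt_exp_mul_one_sub_erf ha (hp.sub hr) hkey)).congr_deriv ?_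
  simp only [Pi.sub_apply]
  ring

end Real

namespace HJB

variable (σ β : ℝ)

noncomputable def psiTail (t x : ℝ) : ℝ :=
  exp (-β * x + β ^ 2 * σ ^ 2 * t / 2) * (1 - erf (x / (σ * √(2 * t)) - β * σ * √t / √2))

noncomputable def psi (t x : ℝ) : ℝ := erf (x / (σ * √(2 * t))) + psiTail σ β t x

variable {σ} {t : ℝ}

theorem psi_exponent_eq (hσ : σ ≠ 0) (ht : 0 < t) (x : ℝ) :
    -β * x + β ^ 2 * σ ^ 2 * t / 2 - (x / (σ * √(2 * t)) - β * σ * √t / √2) ^ 2 =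
      -(x / (σ * √(2 * t))) ^ 2 := by
  have hsqrt : √(2 * t) = √2 * √t := sqrt_mul zero_le_two t
  have ht' : √t ^ 2 = t := sq_sqrt ht.le
  have h2 : √2 ^ 2 = 2 := sq_sqrt zero_le_two
  rw [hsqrt]
  field_simp
  linear_combination (β ^ 2 * σ ^ 4 * t - 2 * β * σ ^ 2 * x) * √t ^ 2 * h2
    - 2 * β ^ 2 * σ ^ 4 * √t ^ 2 * ht'

theorem hasDerivAt_psiTail_space (hσ : σ ≠ 0) (ht : 0 < t) (x : ℝ) :
    HasDerivAt (psiTail σ β t)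
      (-β * psiTail σ β t x - 2 / √π * exp (-(x / (σ * √(2 * t))) ^ 2) / (σ * √(2 * t))) x := by
  have ha : HasDerivAt (fun y => -β * y + β ^ 2 * σ ^ 2 * t / 2) (-β) x := by
    simpa using ((hasDerivAt_id x).const_mul (-β)).add_const (β ^ 2 * σ ^ 2 * t / 2)
  have hq := ((hasDerivAt_id x).div_const (σ * √(2 * t))).sub_const (β * σ * √t / √2)
  refine (hasDerivAt_exp_mul_one_sub_erf ha hq (psi_exponent_eq β hσ ht x)).congr_deriv ?_
  simp only [psiTail, id]
  ring

theorem hasDerivAt_psi_space (hσ : σ ≠ 0) (ht : 0 < t) (x : ℝ) :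
    HasDerivAt (psi σ β t) (-β * psiTail σ β t x) x := by
  have ha : HasDerivAt (fun y => -β * y + β ^ 2 * σ ^ 2 * t / 2) (-β) x := by
    simpa using ((hasDerivAt_id x).const_mul (-β)).add_const (β ^ 2 * σ ^ 2 * t / 2)
  have hp := (hasDerivAt_id x).div_const (σ * √(2 * t))
  refine (hasDerivAt_erf_add_exp_mul_one_sub_erf ha hp (hasDerivAt_const x (β * σ * √t / √2))
    (psi_exponent_eq β hσ ht x)).congr_deriv ?_
  simp only [psiTail, id]
  ring

theorem hasDerivAt_psi_time (hσ : σ ≠ 0) (ht : 0 < t) (x : ℝ) :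
    HasDerivAt (fun s => psi σ β s x)
      (σ ^ 2 / 2 * (-β * (-β * psiTail σ β t x -
        2 / √π * exp (-(x / (σ * √(2 * t))) ^ 2) / (σ * √(2 * t))))) t := by
  have ha : HasDerivAt (fun s => -β * x + β ^ 2 * σ ^ 2 * s / 2) (β ^ 2 * σ ^ 2 / 2) t := by
    simpa using (((hasDerivAt_id t).const_mul (β ^ 2 * σ ^ 2)).div_const 2).const_add (-β * x)
  have hp : DifferentiableAt ℝ (fun s => x / (σ * √(2 * s))) t := by
    fun_prop (disch := positivity)
  have hr := ((hasDerivAt_sqrt ht.ne').const_mul (β * σ)).div_const √2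
  refine (hasDerivAt_erf_add_exp_mul_one_sub_erf ha hp.hasDerivAt hr
    (psi_exponent_eq β hσ ht x)).congr_deriv ?_
  have hsqrt : √(2 * t) = √2 * √t := sqrt_mul zero_le_two t
  simp only [psiTail, hsqrt]
  field_simp
  ring

theorem psi_pos (hσ : 0 ≤ σ) {x : ℝ} (hx : 0 ≤ x) : 0 < psi σ β t x :=
  add_pos_of_nonneg_of_pos (erf_nonneg (by positivity))
    (mul_pos (exp_pos _) (sub_pos.2 (erf_lt_one _)))

end HJB

theorem exists_hasDerivAt_log_of_heat {φ : ℝ → ℝ → ℝ} {φx : ℝ → ℝ} {a β t x φxx : ℝ} (hβ : β ≠ 0)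
    (hne : φ t x ≠ 0) (hφt : HasDerivAt (fun s => φ s x) (a * φxx) t)
    (hφx : ∀ y, HasDerivAt (φ t) (φx y) y) (hφxx : HasDerivAt φx φxx x) :
    ∃ ut ux uxx : ℝ,
      HasDerivAt (fun s => β⁻¹ * log (φ s x)) ut t ∧
      HasDerivAt (fun y => β⁻¹ * log (φ t y)) ux x ∧
      HasDerivAt (deriv fun y => β⁻¹ * log (φ t y)) uxx x ∧
      ut = a * uxx + a * β * ux ^ 2 := by
  have hderiv : deriv (fun y => β⁻¹ * log (φ t y)) =ᶠ[𝓝 x] fun y => β⁻¹ * (φx y / φ t y) := by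
    filter_upwards [(hφx x).continuousAt.eventually_ne hne] with y hy
    exact (((hφx y).log hy).const_mul β⁻¹).deriv
  refine ⟨_, _, _, (hφt.log hne).const_mul β⁻¹, ((hφx x).log hne).const_mul β⁻¹,
    ((hφxx.div (hφx x) hne).const_mul β⁻¹).congr_of_eventuallyEq hderiv, ?_⟩
  field_simp
  ring

/-- The value function U satisfies the semilinear HJB equation
∂_t U(t,z) = (σ²/2)·∂_zz U(t,z) + (γ²/(4κ))·(∂_z U(t,z))² for all t > 0 and all
z ≥ c (all partial derivatives existing at every such point). -/
theorem U_HJB_equation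
    (σ γ κ c : ℝ) (hσ : 0 < σ) (hγ : 0 < γ) (hκ : 0 < κ)
    (β : ℝ) (hβ : β = γ ^ 2 / (2 * κ * σ ^ 2))
    (erf : ℝ → ℝ)
    (herf : ∀ x : ℝ, erf x = (2 / Real.sqrt Real.pi) * ∫ y in (0:ℝ)..x, Real.exp (-y ^ 2))
    (ψ : ℝ → ℝ → ℝ)
    (hψ : ∀ t x : ℝ, ψ t x =
      erf (x / (σ * Real.sqrt (2 * t))) +
        Real.exp (-β * x + β ^ 2 * σ ^ 2 * t / 2) *
          (1 - erf (x / (σ * Real.sqrt (2 * t)) - β * σ * Real.sqrt t / Real.sqrt 2)))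
    (U : ℝ → ℝ → ℝ)
    (hU : ∀ t z : ℝ, U t z = (1 / β) * Real.log (ψ t (z - c))) :
    ∀ t : ℝ, 0 < t → ∀ z : ℝ, c ≤ z →
      ∃ ut uz uzz : ℝ,
        HasDerivAt (fun s => U s z) ut t ∧
        HasDerivAt (fun w => U t w) uz z ∧
        HasDerivAt (deriv (fun w => U t w)) uzz z ∧
        ut = σ ^ 2 / 2 * uzz + γ ^ 2 / (4 * κ) * uz ^ 2 := by
  intro t ht z hz
  obtain rfl : erf = Real.erf := funext herf
  obtain rfl : ψ = HJB.psi σ β := by ext s x; exact hψ s x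
  obtain rfl : U = fun s w => β⁻¹ * log (HJB.psi σ β s (w - c)) := by
    ext s w; rw [hU, one_div]
  have hβ0 : β ≠ 0 := by rw [hβ]; positivity
  rw [show γ ^ 2 / (4 * κ) = σ ^ 2 / 2 * β by rw [hβ]; field_simp; ring]
  exact exists_hasDerivAt_log_of_heat (φ := fun s w => HJB.psi σ β s (w - c)) hβ0
    (HJB.psi_pos β hσ.le (sub_nonneg.2 hz)).ne'
    (HJB.hasDerivAt_psi_time β hσ.ne' ht _)
    (fun w => (HJB.hasDerivAt_psi_space β hσ.ne' ht _).comp_sub_const w c)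
    (((HJB.hasDerivAt_psiTail_space β hσ.ne' ht _).const_mul (-β)).comp_sub_const z c)
end

section
/- The value function U satisfies the boundary condition ∂_z U(t,c) = −1 for every t > 0, where ∂_z U denotes the partial derivative of U with respect to its second argument. -/
/-!
At the boundary `x = 0` the two error-function terms of `ψ t` have derivatives
`(2/√π)/s` and `-e^{a²}·(2/√π)e^{-a²}/s` (with `s = σ√(2t)`, `a = βσ√t/√2`), which cancel
because the exponent `β²σ²t/2` of the prefactor is exactly `a²`. Only the derivative of the
prefactor survives, so `∂ₓψ(t,0) = -β ψ(t,0)`, and hence `∂_z U(t,c) = (1/β)·(-β) = -1`.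
-/

open Real

noncomputable section

def errorFunction (x : ℝ) : ℝ := 2 / √π * ∫ y in (0 : ℝ)..x, exp (-y ^ 2)

lemma hasDerivAt_errorFunction (x : ℝ) :
    HasDerivAt errorFunction (2 / √π * exp (-x ^ 2)) x := by
  have hcont : Continuous fun y : ℝ => exp (-y ^ 2) := by fun_prop
  exact (intervalIntegral.integral_hasDerivAt_right (hcont.intervalIntegrable 0 x)
    (hcont.stronglyMeasurableAtFilter _ _) hcont.continuousAt).const_mul _

lemma errorFunction_zero : errorFunction 0 = 0 := by
  simp [errorFunction]

lemma errorFunction_nonpos {x : ℝ} (hx : x ≤ 0) : errorFunction x ≤ 0 := by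
  rw [errorFunction, intervalIntegral.integral_symm]
  have : 0 ≤ ∫ y in x..0, exp (-y ^ 2) :=
    intervalIntegral.integral_nonneg hx fun y _ => (exp_pos _).le
  have : 0 ≤ 2 / √π := by positivity
  nlinarith

/-- `ψ(t, ·)` for `s = σ√(2t)`, `a = βσ√t/√2`, with the exponent `β²σ²t/2` written as `a²`. -/
def boundaryProfile (E : ℝ → ℝ) (β s a x : ℝ) : ℝ :=
  E (x / s) + exp (-β * x + a ^ 2) * (1 - E (x / s - a))

lemma boundaryProfile_zero {E : ℝ → ℝ} (hE : E 0 = 0) (β s a : ℝ) :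
    boundaryProfile E β s a 0 = exp (a ^ 2) * (1 - E (-a)) := by
  simp [boundaryProfile, hE]

lemma hasDerivAt_boundaryProfile_zero {E : ℝ → ℝ} {C : ℝ}
    (hE : ∀ y, HasDerivAt E (C * exp (-y ^ 2)) y) (hE0 : E 0 = 0) (β s a : ℝ) :
    HasDerivAt (boundaryProfile E β s a) (-β * boundaryProfile E β s a 0) 0 := by
  rw [boundaryProfile_zero hE0]
  have hscale : HasDerivAt (fun x : ℝ => x / s) (1 / s) 0 := (hasDerivAt_id 0).div_const s
  have hfirst := (hE (0 / s)).comp 0 hscale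
  have hprefactor : HasDerivAt (fun x : ℝ => exp (-β * x + a ^ 2)) (exp (a ^ 2) * -β) 0 := by
    simpa using (((hasDerivAt_id (0 : ℝ)).const_mul (-β)).add_const (a ^ 2)).exp
  have hsecond := ((hE (0 / s - a)).comp 0 (hscale.sub_const a)).const_sub 1
  refine (hfirst.add (hprefactor.mul hsecond)).congr_deriv ?_
  have hcancel : exp (a ^ 2) * exp (-(-a) ^ 2) = 1 := by
    rw [← exp_add, neg_sq, add_neg_cancel, exp_zero]
  simp only [Function.comp_apply, zero_div, zero_sub, mul_zero, zero_add, ne_eq,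
    OfNat.ofNat_ne_zero, not_false_eq_true, zero_pow, neg_zero, exp_zero]
  linear_combination -(C * (1 / s)) * hcancel

lemma hasDerivAt_inv_mul_log_comp_sub {f : ℝ → ℝ} {β : ℝ} (hβ : β ≠ 0) (hf0 : f 0 ≠ 0)
    (hf : HasDerivAt f (-β * f 0) 0) (c : ℝ) :
    HasDerivAt (fun z => 1 / β * log (f (z - c))) (-1) c := by
  have hshift : HasDerivAt (fun z => f (z - c)) (-β * f 0) c :=
    HasDerivAt.comp_sub_const c c (by rwa [sub_self])
  have hlog := (hshift.log (by rwa [sub_self])).const_mul (1 / β)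
  rw [sub_self] at hlog
  refine hlog.congr_deriv ?_
  field_simp

end

/-- The value function U satisfies the boundary condition
∂_z U(t,c) = −1 for every t > 0, where ∂_z U denotes the partial derivative of U
with respect to its second argument. -/
theorem U_boundary_condition
    (σ γ κ c : ℝ) (hσ : 0 < σ) (hγ : 0 < γ) (hκ : 0 < κ)
    (β : ℝ) (hβ : β = γ ^ 2 / (2 * κ * σ ^ 2))
    (erf : ℝ → ℝ)
    (herf : ∀ x : ℝ, erf x = (2 / Real.sqrt Real.pi) * ∫ y in (0:ℝ)..x, Real.exp (-y ^ 2))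
    (ψ : ℝ → ℝ → ℝ)
    (hψ : ∀ t x : ℝ, ψ t x =
      erf (x / (σ * Real.sqrt (2 * t))) +
        Real.exp (-β * x + β ^ 2 * σ ^ 2 * t / 2) *
          (1 - erf (x / (σ * Real.sqrt (2 * t)) - β * σ * Real.sqrt t / Real.sqrt 2)))
    (U : ℝ → ℝ → ℝ)
    (hU : ∀ t z : ℝ, U t z = (1 / β) * Real.log (ψ t (z - c))) :
    ∀ t : ℝ, 0 < t → HasDerivAt (fun z => U t z) (-1) c := by
  intro t ht
  have hβ0 : 0 < β := by rw [hβ]; positivity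
  obtain rfl : erf = errorFunction := funext herf
  set a := β * σ * √t / √2
  have ha : 0 ≤ a := by positivity
  have hψ_eq : ψ t = boundaryProfile errorFunction β (σ * √(2 * t)) a := by
    funext x
    have hexponent : β ^ 2 * σ ^ 2 * t / 2 = a ^ 2 := by
      rw [div_pow, mul_pow, mul_pow, sq_sqrt ht.le, sq_sqrt zero_le_two]
    rw [hψ, hexponent]
    rfl
  have hψ0_pos : 0 < ψ t 0 := by
    rw [hψ_eq, boundaryProfile_zero errorFunction_zero]
    exact mul_pos (exp_pos _) (by linarith [errorFunction_nonpos (neg_nonpos.mpr ha)])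
  have hderiv : HasDerivAt (ψ t) (-β * ψ t 0) 0 := by
    rw [hψ_eq]
    exact hasDerivAt_boundaryProfile_zero hasDerivAt_errorFunction errorFunction_zero _ _ _
  simp_rw [hU]
  exact hasDerivAt_inv_mul_log_comp_sub hβ0.ne' hψ0_pos.ne' hderiv c
end
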